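/- arXiv:math/0208072 — 5 statements merged into one kernel-verified Lean document; each statement's English description precedes it below -/
import Mathlib

section
/- For all integers n and k with n ≥ 2k > 0, the 2-colorability defect of the system of all k-element subsets of [n] equals n − 2k + 2. -/
open Finset

attribute [local instance] Classical.propDecidable

noncomputable section

/-- The 2-colorability defect `cd₂(𝓕)` of a set system `𝓕` with ground set `X`:
the minimum size of a set `Y ⊆ X` for which there exist disjoint `R`, `B` with
`R ∪ B = X \ Y` such that no member of `𝓕` is contained in `R` and none in `B`. -/
def cd2 {α : Type*} (X : Finset α) (𝓕 : Finset (Finset α)) : ℕ :=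
  sInf {m | ∃ Y R B : Finset α, Y ⊆ X ∧ Y.card = m ∧ Disjoint R B ∧ R ∪ B = X \ Y ∧
    (∀ F ∈ 𝓕, ¬ F ⊆ R) ∧ (∀ F ∈ 𝓕, ¬ F ⊆ B)}

/-- For `n ≥ 2k > 0`, the 2-colorability defect of the system of all `k`-element
subsets of `[n] = {1, …, n}` equals `n - 2k + 2`. -/
theorem cd2_powersetCard (n k : ℕ) (h1 : 2 * k ≤ n) (h2 : 0 < k) :
    cd2 (Finset.Icc 1 n) ((Finset.Icc 1 n).powersetCard k) = n - 2 * k + 2 := by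
  have hcardR : ∀ R : Finset ℕ, R ⊆ Finset.Icc 1 n →
      (∀ F ∈ (Finset.Icc 1 n).powersetCard k, ¬ F ⊆ R) → R.card ≤ k - 1 := by
    intro R hR hF
    by_contra h
    obtain ⟨F, hFR, hFk⟩ := Finset.exists_subset_card_eq (show k ≤ R.card by omega)
    exact hF F (Finset.mem_powersetCard.mpr ⟨hFR.trans hR, hFk⟩) hFR
  apply le_antisymm
  · apply Nat.sInf_le
    refine ⟨Finset.Icc 1 (n - 2*k + 2), Finset.Icc (n - 2*k + 3) (n - k + 1),
      Finset.Icc (n - k + 2) n, ?_, ?_, ?_, ?_, ?_, ?_⟩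
    · intro x hx; simp only [Finset.mem_Icc] at *; omega
    · rw [Nat.card_Icc]; omega
    · rw [Finset.disjoint_left]; intro x hx hx'
      simp only [Finset.mem_Icc] at *; omega
    · ext x
      simp only [Finset.mem_union, Finset.mem_sdiff, Finset.mem_Icc]
      omega
    · intro F hF hsub
      rw [Finset.mem_powersetCard] at hF
      obtain ⟨-, hk⟩ := hF
      have := Finset.card_le_card hsub
      rw [Nat.card_Icc] at this
      omega
    · intro F hF hsub
      rw [Finset.mem_powersetCard] at hF
      obtain ⟨-, hk⟩ := hF
      have := Finset.card_le_card hsub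
      rw [Nat.card_Icc] at this
      omega
  · apply le_csInf
    · refine ⟨(Finset.Icc 1 n).card, Finset.Icc 1 n, ∅, ∅, Finset.Subset.refl _, rfl, ?_, ?_, ?_, ?_⟩
      · simp
      · simp [Finset.sdiff_self]
      · intro F hF hsub
        rw [Finset.mem_powersetCard] at hF
        obtain ⟨-, hk⟩ := hF
        have := Finset.card_le_card hsub
        simp only [Finset.card_empty, Nat.le_zero] at this
        omega
      · intro F hF hsub
        rw [Finset.mem_powersetCard] at hF
        obtain ⟨-, hk⟩ := hF
        have := Finset.card_le_card hsub
        simp only [Finset.card_empty, Nat.le_zero] at this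
        omega
    · rintro m ⟨Y, R, B, hY, hYm, hd, hu, hFR, hFB⟩
      have hmem := fun x => Finset.ext_iff.mp hu x
      simp only [Finset.mem_union, Finset.mem_sdiff] at hmem
      have hu' : R ∪ B = Finset.Icc 1 n \ Y := by
        ext x
        simp only [Finset.mem_union, Finset.mem_sdiff]
        exact hmem x
      have hRX : R ⊆ Finset.Icc 1 n := fun x hx => ((hmem x).mp (Or.inl hx)).1
      have hBX : B ⊆ Finset.Icc 1 n := fun x hx => ((hmem x).mp (Or.inr hx)).1
      have hR := hcardR R hRX hFR
      have hB := hcardR B hBX hFB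
      have hsd : (R ∪ B).card = n - Y.card := by
        rw [hu', Finset.card_sdiff_of_subset hY, Nat.card_Icc]; omega
      rw [Finset.card_union_of_disjoint hd] at hsd
      have hYn : Y.card ≤ n := by
        have := Finset.card_le_card hY
        rwa [Nat.card_Icc] at this
      omega
end
end

section
/- Let G be a finite simple graph without isolated vertices. (a) The map sending each vertex F⃗ of sd B_edge(G) (i.e., each nonempty simplex F⃗ of B_edge(G), a set of directed edges) to h(F⃗) ⊎ t(F⃗), where h(F⃗) is the set of tails and t(F⃗) the set of heads of the directed edges in F⃗, is a simplicial ℤ₂-map sd B_edge(G) → B₁(G). (b) The map sending each vertex A′ ⊎ A″ of B₁(G) to the directed edge set A′ × A″ (a nonempty simplex of B_edge(G), hence a vertex of sd B_edge(G)) is a simplicial ℤ₂-map B₁(G) → sd B_edge(G). -/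
open Finset

attribute [local instance] Classical.propDecidable

noncomputable section

variable {V : Type*}

/-- The set `CN(A)` of common neighbors of `A` in `G` (so `CN(∅) = V`). -/
def CN [Fintype V] (G : SimpleGraph V) (A : Finset V) : Finset V :=
  Finset.univ.filter fun v => ∀ a ∈ A, G.Adj a v

/-- The shore of `S ⊆ V × {1,2}` lying over `b` (with `false` for the first copy of `V`
and `true` for the second). -/
def shore (S : Finset (V × Bool)) (b : Bool) : Finset V :=
  (S.filter fun p => p.2 = b).image Prod.fst

/-- `A' ⊎ A'' := (A' × {1}) ∪ (A'' × {2})`, with `false` for `1` and `true` for `2`. -/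
def joinPair (A' A'' : Finset V) : Finset (V × Bool) :=
  A'.image (fun v => (v, false)) ∪ A''.image (fun v => (v, true))

/-- The ℤ₂-action on subsets of `V × {1,2}`: interchange the two copies of `V`,
i.e. `A' ⊎ A'' ↦ A'' ⊎ A'`. -/
def swapFinset (S : Finset (V × Bool)) : Finset (V × Bool) :=
  S.image fun p => (p.1, !p.2)

/-- `G[A', A'']` is complete: every vertex of `A'` is adjacent to every vertex of `A''`. -/
def IsCompleteBip (G : SimpleGraph V) (A' A'' : Finset V) : Prop :=
  ∀ a ∈ A', ∀ b ∈ A'', G.Adj a b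

/-- Simplices of the box complex `B(G)`: sets `A' ⊎ A''` with `A'`, `A''` disjoint,
`G[A', A'']` complete and `CN(A') ≠ ∅ ≠ CN(A'')`. -/
def BoxSimplex [Fintype V] (G : SimpleGraph V) (S : Finset (V × Bool)) : Prop :=
  Disjoint (shore S false) (shore S true) ∧
  IsCompleteBip G (shore S false) (shore S true) ∧
  (CN G (shore S false)).Nonempty ∧ (CN G (shore S true)).Nonempty

/-- Simplices of the box complex `B₀(G)`: sets `A' ⊎ A''` with `A'`, `A''` disjoint and
`G[A', A'']` complete. -/
def Box0Simplex (G : SimpleGraph V) (S : Finset (V × Bool)) : Prop :=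
  Disjoint (shore S false) (shore S true) ∧
  IsCompleteBip G (shore S false) (shore S true)

/-- Vertices of `B₁(G)`: sets `A' ⊎ A''` with `A'`, `A''` nonempty, disjoint and
`G[A', A'']` complete. -/
def B1Vertex (G : SimpleGraph V) (S : Finset (V × Bool)) : Prop :=
  (shore S false).Nonempty ∧ (shore S true).Nonempty ∧
  Disjoint (shore S false) (shore S true) ∧
  IsCompleteBip G (shore S false) (shore S true)

/-- Simplices of the order complex `B₁(G)`: chains of vertices of `B₁(G)` under inclusion. -/
def B1Simplex (G : SimpleGraph V) (C : Finset (Finset (V × Bool))) : Prop :=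
  (∀ T ∈ C, B1Vertex G T) ∧ IsChain (· ⊆ ·) (C : Set (Finset (V × Bool)))

/-- Simplices of the barycentric subdivision `sd K` of the complex `K` whose simplices are
given by the predicate `P`: chains of nonempty simplices of `K` under inclusion. -/
def sdSimplex {γ : Type*} (P : Finset γ → Prop) (C : Finset (Finset γ)) : Prop :=
  (∀ S ∈ C, P S ∧ S.Nonempty) ∧ IsChain (· ⊆ ·) (C : Set (Finset γ))

/-- Simplices of `B_edge(G)`: sets of directed edges contained in `A' × A''` for some
complete bipartite subgraph `G[A', A'']` with both shores nonempty. -/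
def BedgeSimplex (G : SimpleGraph V) (S : Finset (V × V)) : Prop :=
  ∃ A' A'' : Finset V, A'.Nonempty ∧ A''.Nonempty ∧ Disjoint A' A'' ∧
    IsCompleteBip G A' A'' ∧ S ⊆ A' ×ˢ A''

/-- The map `F⃗ ↦ h(F⃗) ⊎ t(F⃗)` collecting the tails and the heads of a set of
directed edges. -/
def tailsHeads (S : Finset (V × V)) : Finset (V × Bool) :=
  joinPair (S.image Prod.fst) (S.image Prod.snd)

/-- The map `A' ⊎ A'' ↦ A' × A''` sending a vertex of `B₁(G)` to the directed edge set
of the corresponding complete bipartite subgraph. -/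
def fullEdges (T : Finset (V × Bool)) : Finset (V × V) :=
  (shore T false) ×ˢ (shore T true)

lemma mem_shore {S : Finset (V × Bool)} {b : Bool} {v : V} :
    v ∈ shore S b ↔ (v, b) ∈ S := by
  simp only [shore, mem_image, mem_filter]
  constructor
  · rintro ⟨⟨x, y⟩, ⟨hx, rfl⟩, rfl⟩; exact hx
  · intro h; exact ⟨(v, b), ⟨h, rfl⟩, rfl⟩

lemma shore_mono {S T : Finset (V × Bool)} (h : S ⊆ T) (b : Bool) :
    shore S b ⊆ shore T b := fun v hv => mem_shore.2 (h (mem_shore.1 hv))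

lemma shore_joinPair (A' A'' : Finset V) (b : Bool) :
    shore (joinPair A' A'') b = bif b then A'' else A' := by
  ext v
  cases b <;> simp [mem_shore, joinPair]

lemma mem_swapFinset {S : Finset (V × Bool)} {v : V} {b : Bool} :
    (v, b) ∈ swapFinset S ↔ (v, !b) ∈ S := by
  simp only [swapFinset, mem_image]
  constructor
  · rintro ⟨⟨x, y⟩, hx, h⟩
    injection h with h1 h2
    subst h1; subst h2
    simpa using hx
  · intro h; exact ⟨(v, !b), h, by simp⟩

lemma shore_swapFinset (S : Finset (V × Bool)) (b : Bool) :
    shore (swapFinset S) b = shore S (!b) := by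
  ext v; simp [mem_shore, mem_swapFinset]

lemma shore_tailsHeads_false (S : Finset (V × V)) :
    shore (tailsHeads S) false = S.image Prod.fst := by
  simp [tailsHeads, shore_joinPair]

lemma shore_tailsHeads_true (S : Finset (V × V)) :
    shore (tailsHeads S) true = S.image Prod.snd := by
  simp [tailsHeads, shore_joinPair]

lemma tailsHeads_mono {S T : Finset (V × V)} (h : S ⊆ T) :
    tailsHeads S ⊆ tailsHeads T := by
  rintro ⟨v, b⟩ hv
  cases b
  · rw [← mem_shore, shore_tailsHeads_false] at hv ⊢
    exact image_subset_image h hv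
  · rw [← mem_shore, shore_tailsHeads_true] at hv ⊢
    exact image_subset_image h hv

lemma fullEdges_mono {S T : Finset (V × Bool)} (h : S ⊆ T) :
    fullEdges S ⊆ fullEdges T :=
  product_subset_product (shore_mono h false) (shore_mono h true)

/-- (a) `F⃗ ↦ h(F⃗) ⊎ t(F⃗)` is a simplicial ℤ₂-map `sd B_edge(G) → B₁(G)`;
(b) `A' ⊎ A'' ↦ A' × A''` is a simplicial ℤ₂-map `B₁(G) → sd B_edge(G)`. -/
theorem sd_Bedge_iso_B1 [Fintype V] (G : SimpleGraph V) (hiso : ∀ v : V, ∃ u, G.Adj v u) :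
    -- (a)
    ((∀ C : Finset (Finset (V × V)), sdSimplex (BedgeSimplex G) C →
        B1Simplex G (C.image tailsHeads)) ∧
      (∀ S : Finset (V × V), BedgeSimplex G S → S.Nonempty →
        tailsHeads (S.image Prod.swap) = swapFinset (tailsHeads S))) ∧
    -- (b)
    ((∀ C : Finset (Finset (V × Bool)), B1Simplex G C →
        sdSimplex (BedgeSimplex G) (C.image fullEdges)) ∧
      (∀ T : Finset (V × Bool), B1Vertex G T →
        fullEdges (swapFinset T) = (fullEdges T).image Prod.swap)) := by
  refine ⟨⟨?_, ?_⟩, ?_, ?_⟩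
  · -- (a) simplicial
    intro C hC
    obtain ⟨hmem, hchain⟩ := hC
    constructor
    · intro T hT
      obtain ⟨S, hS, rfl⟩ := mem_image.1 hT
      obtain ⟨⟨A', A'', hA'ne, hA''ne, hdisj, hcomp, hsub⟩, hSne⟩ := hmem S hS
      have hf : shore (tailsHeads S) false ⊆ A' := by
        rw [shore_tailsHeads_false]
        intro v hv
        obtain ⟨p, hp, rfl⟩ := mem_image.1 hv
        exact (mem_product.1 (hsub hp)).1
      have ht : shore (tailsHeads S) true ⊆ A'' := by
        rw [shore_tailsHeads_true]
        intro v hv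
        obtain ⟨p, hp, rfl⟩ := mem_image.1 hv
        exact (mem_product.1 (hsub hp)).2
      refine ⟨?_, ?_, hdisj.mono hf ht, fun a ha b hb => hcomp a (hf ha) b (ht hb)⟩
      · rw [shore_tailsHeads_false]; exact hSne.image _
      · rw [shore_tailsHeads_true]; exact hSne.image _
    · intro T hT T' hT' hne
      obtain ⟨S, hS, rfl⟩ := mem_image.1 (by exact_mod_cast hT)
      obtain ⟨S', hS', rfl⟩ := mem_image.1 (by exact_mod_cast hT')
      rcases eq_or_ne S S' with rfl | hSS
      · exact Or.inl (subset_refl _)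
      · rcases hchain hS hS' hSS with h | h
        · exact Or.inl (tailsHeads_mono h)
        · exact Or.inr (tailsHeads_mono h)
  · -- (a) equivariance
    intro S _ _
    have : ∀ b : Bool, shore (tailsHeads (S.image Prod.swap)) b =
        shore (swapFinset (tailsHeads S)) b := by
      intro b
      cases b <;>
        simp [shore_tailsHeads_false, shore_tailsHeads_true, shore_swapFinset,
          image_image, Function.comp_def]
    ext ⟨v, b⟩
    rw [← mem_shore, ← mem_shore, this b]
  · -- (b) simplicial
    intro C hC
    obtain ⟨hmem, hchain⟩ := hC
    constructor
    · intro S hS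
      obtain ⟨T, hT, rfl⟩ := mem_image.1 hS
      obtain ⟨hne1, hne2, hdisj, hcomp⟩ := hmem T hT
      exact ⟨⟨_, _, hne1, hne2, hdisj, hcomp, subset_refl _⟩,
        Finset.Nonempty.product hne1 hne2⟩
    · intro S hS S' hS' hne
      obtain ⟨T, hT, rfl⟩ := mem_image.1 (by exact_mod_cast hS)
      obtain ⟨T', hT', rfl⟩ := mem_image.1 (by exact_mod_cast hS')
      rcases eq_or_ne T T' with rfl | hTT
      · exact Or.inl (subset_refl _)
      · rcases hchain hT hT' hTT with h | h
        · exact Or.inl (fullEdges_mono h)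
        · exact Or.inr (fullEdges_mono h)
  · -- (b) equivariance
    intro T _
    ext ⟨u, w⟩
    simp only [fullEdges, shore_swapFinset, Bool.not_false, Bool.not_true,
      mem_product, mem_image, Prod.exists]
    constructor
    · rintro ⟨hu, hw⟩
      exact ⟨w, u, ⟨hw, hu⟩, rfl⟩
    · rintro ⟨a, b, ⟨ha, hb⟩, h⟩
      obtain ⟨rfl, rfl⟩ : b = u ∧ a = w := by simpa [Prod.ext_iff] using h
      exact ⟨hb, ha⟩
end
end

section
/- Let G be a finite simple graph without isolated vertices. Every vertex A′ ⊎ A″ of B₁(G) is a nonempty simplex of the box complex B(G), and the resulting identity map on vertices is a simplicial ℤ₂-map B₁(G) → sd B(G). -/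
open Finset

attribute [local instance] Classical.propDecidable

noncomputable section

variable {V : Type*}

/-- Every vertex `A' ⊎ A''` of `B₁(G)` is a nonempty simplex of the box complex `B(G)`,
and the resulting identity map on vertices is a simplicial ℤ₂-map `B₁(G) → sd B(G)`. -/
theorem B1_into_sd_box [Fintype V] (G : SimpleGraph V) (hiso : ∀ v : V, ∃ u, G.Adj v u) :
    (∀ T : Finset (V × Bool), B1Vertex G T → BoxSimplex G T ∧ T.Nonempty) ∧
    (∀ C : Finset (Finset (V × Bool)), B1Simplex G C → sdSimplex (BoxSimplex G) C) ∧
    (∀ T : Finset (V × Bool), B1Vertex G T → id (swapFinset T) = swapFinset (id T)) := by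
  have main : ∀ T : Finset (V × Bool), B1Vertex G T → BoxSimplex G T ∧ T.Nonempty := by
    intro T hT
    obtain ⟨⟨a, ha⟩, ⟨b, hb⟩, hdisj, hcomp⟩ := hT
    refine ⟨⟨hdisj, hcomp, ⟨b, ?_⟩, ⟨a, ?_⟩⟩, ?_⟩
    · simp only [CN, Finset.mem_filter, Finset.mem_univ, true_and]
      intro x hx; exact hcomp x hx b hb
    · simp only [CN, Finset.mem_filter, Finset.mem_univ, true_and]
      intro x hx; exact (hcomp a ha x hx).symm
    · simp only [shore, Finset.mem_image, Finset.mem_filter] at ha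
      obtain ⟨p, ⟨hp, _⟩, _⟩ := ha
      exact ⟨p, hp⟩
  refine ⟨main, ?_, fun T _ => rfl⟩
  intro C hC
  exact ⟨fun S hS => main S (hC.1 S hS), hC.2⟩
end
end

section
/- Let G be a finite simple graph without isolated vertices. The map defined on the vertices of sd B₀(G) (the nonempty simplices A′ ⊎ A″ of B₀(G)) by sending A′ ⊎ A″ to itself (a vertex of B₁(G)) when both A′ and A″ are nonempty, sending A′ ⊎ ∅ to the suspension point s, and sending ∅ ⊎ A″ to the suspension point n, is a simplicial ℤ₂-map sd B₀(G) → susp B₁(G). -/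
open Finset

attribute [local instance] Classical.propDecidable

noncomputable section

variable {V : Type*}

/-- The vertex map `sd B₀(G) → susp B₁(G)`: a nonempty simplex `A' ⊎ A''` of `B₀(G)` is
sent to itself if both shores are nonempty, to the suspension point `s` (here
`Sum.inr false`) if `A'' = ∅, and to the suspension point `n` (here `Sum.inr true`)
if `A' = ∅`. -/
def suspMap (T : Finset (V × Bool)) : Finset (V × Bool) ⊕ Bool :=
  if (shore T false).Nonempty ∧ (shore T true).Nonempty then Sum.inl T
  else if (shore T false).Nonempty then Sum.inr false
  else Sum.inr true

/-- The ℤ₂-action on `susp B₁(G)`: the action of `B₁(G)` on the old vertices, and the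
exchange `s ↔ n` of the two suspension points. -/
def suspSwap (x : Finset (V × Bool) ⊕ Bool) : Finset (V × Bool) ⊕ Bool :=
  match x with
  | Sum.inl T => Sum.inl (swapFinset T)
  | Sum.inr b => Sum.inr (!b)

/-- Simplices of the suspension `susp B₁(G)`: simplices of `B₁(G)` with at most one of the
two new vertices `s = Sum.inr false`, `n = Sum.inr true` added. -/
def SuspB1Simplex (G : SimpleGraph V) (D : Finset (Finset (V × Bool) ⊕ Bool)) : Prop :=
  ∃ C : Finset (Finset (V × Bool)), B1Simplex G C ∧
    (D = C.image Sum.inl ∨ D = insert (Sum.inr false) (C.image Sum.inl) ∨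
      D = insert (Sum.inr true) (C.image Sum.inl))

lemma shore_swap (T : Finset (V × Bool)) (b : Bool) :
    shore (swapFinset T) b = shore T (!b) := by
  ext v
  simp only [mem_shore, swapFinset, mem_image]
  constructor
  · rintro ⟨⟨x, c⟩, hx, h⟩
    obtain ⟨rfl, rfl⟩ : x = v ∧ c = !b := by simpa [Prod.ext_iff] using h
    exact hx
  · intro h
    exact ⟨(v, !b), h, by simp⟩

lemma nonempty_shore {T : Finset (V × Bool)} (h : T.Nonempty) :
    (shore T false).Nonempty ∨ (shore T true).Nonempty := by
  obtain ⟨⟨v, b⟩, hv⟩ := h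
  cases b
  · exact Or.inl ⟨v, mem_shore.mpr hv⟩
  · exact Or.inr ⟨v, mem_shore.mpr hv⟩

/-- The map above is a simplicial ℤ₂-map `sd B₀(G) → susp B₁(G)`. -/
theorem sd_B0_to_susp_B1 [Fintype V] (G : SimpleGraph V) (hiso : ∀ v : V, ∃ u, G.Adj v u) :
    (∀ C : Finset (Finset (V × Bool)), sdSimplex (Box0Simplex G) C →
      SuspB1Simplex G (C.image suspMap)) ∧
    (∀ T : Finset (V × Bool), Box0Simplex G T → T.Nonempty →
      suspMap (swapFinset T) = suspSwap (suspMap T)) := by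
  constructor
  · intro C hC
    obtain ⟨hmem, hchain⟩ := hC
    set C' := C.filter (fun T => (shore T false).Nonempty ∧ (shore T true).Nonempty)
      with hC'def
    have hC'sub : C' ⊆ C := filter_subset _ _
    have hB1 : B1Simplex G C' := by
      constructor
      · intro T hT
        rw [hC'def, mem_filter] at hT
        obtain ⟨hTC, h1, h2⟩ := hT
        exact ⟨h1, h2, (hmem T hTC).1.1, (hmem T hTC).1.2⟩
      · exact hchain.mono (by exact_mod_cast hC'sub)
    refine ⟨C', hB1, ?_⟩
    have hclass : ∀ T ∈ C, ((shore T false).Nonempty ∧ (shore T true).Nonempty)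
        ∨ ((shore T false).Nonempty ∧ ¬ (shore T true).Nonempty)
        ∨ (¬ (shore T false).Nonempty ∧ (shore T true).Nonempty) := by
      intro T hT
      rcases nonempty_shore (hmem T hT).2 with h | h
      · by_cases h2 : (shore T true).Nonempty
        · exact Or.inl ⟨h, h2⟩
        · exact Or.inr (Or.inl ⟨h, h2⟩)
      · by_cases h1 : (shore T false).Nonempty
        · exact Or.inl ⟨h1, h⟩
        · exact Or.inr (Or.inr ⟨h1, h⟩)
    have hnotboth : ¬ ((∃ T ∈ C, (shore T false).Nonempty ∧ ¬ (shore T true).Nonempty) ∧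
        (∃ T ∈ C, ¬ (shore T false).Nonempty ∧ (shore T true).Nonempty)) := by
      rintro ⟨⟨S, hSC, hS1, hS2⟩, ⟨T, hTC, hT1, hT2⟩⟩
      have hne : S ≠ T := by
        rintro rfl; exact hT1 hS1
      rcases hchain (mem_coe.mpr hSC) (mem_coe.mpr hTC) hne with h | h
      · exact hT1 (hS1.mono (shore_mono h false))
      · exact hS2 (hT2.mono (shore_mono h true))
    by_cases pf : ∃ T ∈ C, (shore T false).Nonempty ∧ ¬ (shore T true).Nonempty
    · right; left
      ext x
      simp only [mem_insert, mem_image]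
      constructor
      · rintro ⟨T, hTC, rfl⟩
        rcases hclass T hTC with ⟨h1, h2⟩ | ⟨h1, h2⟩ | ⟨h1, h2⟩
        · exact Or.inr ⟨T, by rw [hC'def, mem_filter]; exact ⟨hTC, h1, h2⟩,
            by simp [suspMap, h1, h2]⟩
        · exact Or.inl (by simp [suspMap, h1, h2])
        · exact absurd ⟨pf, T, hTC, h1, h2⟩ hnotboth
      · rintro (rfl | ⟨T, hTC', rfl⟩)
        · obtain ⟨T, hTC, h1, h2⟩ := pf
          exact ⟨T, hTC, by simp [suspMap, h1, h2]⟩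
        · rw [hC'def, mem_filter] at hTC'
          exact ⟨T, hTC'.1, by simp [suspMap, hTC'.2.1, hTC'.2.2]⟩
    · by_cases pt : ∃ T ∈ C, ¬ (shore T false).Nonempty ∧ (shore T true).Nonempty
      · right; right
        ext x
        simp only [mem_insert, mem_image]
        constructor
        · rintro ⟨T, hTC, rfl⟩
          rcases hclass T hTC with ⟨h1, h2⟩ | ⟨h1, h2⟩ | ⟨h1, h2⟩
          · exact Or.inr ⟨T, by rw [hC'def, mem_filter]; exact ⟨hTC, h1, h2⟩,
              by simp [suspMap, h1, h2]⟩
          · exact absurd ⟨T, hTC, h1, h2⟩ pf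
          · exact Or.inl (by simp [suspMap, h1, h2])
        · rintro (rfl | ⟨T, hTC', rfl⟩)
          · obtain ⟨T, hTC, h1, h2⟩ := pt
            exact ⟨T, hTC, by simp [suspMap, h1, h2]⟩
          · rw [hC'def, mem_filter] at hTC'
            exact ⟨T, hTC'.1, by simp [suspMap, hTC'.2.1, hTC'.2.2]⟩
      · left
        ext x
        simp only [mem_image]
        constructor
        · rintro ⟨T, hTC, rfl⟩
          rcases hclass T hTC with ⟨h1, h2⟩ | ⟨h1, h2⟩ | ⟨h1, h2⟩
          · exact ⟨T, by rw [hC'def, mem_filter]; exact ⟨hTC, h1, h2⟩,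
              by simp [suspMap, h1, h2]⟩
          · exact absurd ⟨T, hTC, h1, h2⟩ pf
          · exact absurd ⟨T, hTC, h1, h2⟩ pt
        · rintro ⟨T, hTC', rfl⟩
          rw [hC'def, mem_filter] at hTC'
          exact ⟨T, hTC'.1, by simp [suspMap, hTC'.2.1, hTC'.2.2]⟩
  · intro T _ hne
    by_cases h1 : (shore T false).Nonempty
    · by_cases h2 : (shore T true).Nonempty
      · simp [suspMap, suspSwap, shore_swap, h1, h2]
      · simp [suspMap, suspSwap, shore_swap, h1, h2]
    · have h2 : (shore T true).Nonempty := (nonempty_shore hne).resolve_left h1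
      simp [suspMap, suspSwap, shore_swap, h1, h2]
end
end

section
/- Let G be a finite simple graph without isolated vertices. The map sending each vertex 𝔸 = (A₀ ⊂ A₁ ⊂ ⋯ ⊂ A_k) of sd L(G) (a chain of nonempty closed sets) to A₀ ⊎ CN(A_k) is a well-defined simplicial ℤ₂-map sd L(G) → B₁(G). -/
open Finset

attribute [local instance] Classical.propDecidable

noncomputable section

variable {V : Type*}

/-- Vertices of the Lovász complex `L(G)`: nonempty proper closed subsets of `V`. -/
def LVertex [Fintype V] (G : SimpleGraph V) (A : Finset V) : Prop :=
  A.Nonempty ∧ A ≠ Finset.univ ∧ CN G (CN G A) = A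

/-- Simplices of the Lovász complex `L(G)`: chains of closed sets under inclusion. -/
def LSimplex [Fintype V] (G : SimpleGraph V) (C : Finset (Finset V)) : Prop :=
  (∀ A ∈ C, LVertex G A) ∧ IsChain (· ⊆ ·) (C : Set (Finset V))

/-- Vertices of `sd L(G)`: nonempty chains `𝔸 = (A₀ ⊂ ⋯ ⊂ A_k)` of closed sets. -/
def SdLVertex [Fintype V] (G : SimpleGraph V) (𝔸 : Finset (Finset V)) : Prop :=
  𝔸.Nonempty ∧ LSimplex G 𝔸

/-!
A chain `A₀ ⊂ ⋯ ⊂ A_k` of closed sets gives the vertex `A₀ ⊎ CN(A_k)` of `B₁(G)`: the two shores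
are completely joined because `A₀ ⊆ A_k`, disjoint because `G` has no loops, and `CN(A_k) ≠ ∅`
because `A_k ≠ V` is closed. Enlarging a chain lowers `A₀` and raises `A_k`, so the map reverses
inclusion and sends chains of chains to chains. Finally `CN` is an inclusion-reversing involution
on closed sets, so it exchanges least and greatest elements of a chain; this is equivariance.
-/

theorem IsChain.exists_isLeast {α : Type*} [PartialOrder α] {s : Finset α} (hne : s.Nonempty)
    (hs : IsChain (· ≤ ·) (s : Set α)) : ∃ a, IsLeast (s : Set α) a := by
  obtain ⟨m, hm⟩ := s.exists_minimal hne
  refine ⟨m, hm.1, fun b hb => ?_⟩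
  rcases hs.total hm.1 hb with h | h
  · exact h
  · exact (hm.eq_of_le hb h).ge

theorem IsChain.exists_isGreatest {α : Type*} [PartialOrder α] {s : Finset α} (hne : s.Nonempty)
    (hs : IsChain (· ≤ ·) (s : Set α)) : ∃ a, IsGreatest (s : Set α) a :=
  IsChain.exists_isLeast (α := αᵒᵈ) hne hs.symm

theorem IsChain.image_of_antitoneOn {α β : Type*} [Preorder α] [Preorder β] {f : α → β}
    {c : Set α} (hf : AntitoneOn f c) (hc : IsChain (· ≤ ·) c) : IsChain (· ≤ ·) (f '' c) := by
  rintro _ ⟨x, hx, rfl⟩ _ ⟨y, hy, rfl⟩ hxy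
  rcases hc hx hy (ne_of_apply_ne f hxy) with h | h
  exacts [Or.inr (hf hx hy h), Or.inl (hf hy hx h)]

theorem shore_joinPair_false (A B : Finset V) : shore (joinPair A B) false = A := by
  ext v; simp [shore, joinPair]

theorem shore_joinPair_true (A B : Finset V) : shore (joinPair A B) true = B := by
  ext v; simp [shore, joinPair]

theorem swapFinset_joinPair (A B : Finset V) : swapFinset (joinPair A B) = joinPair B A := by
  ext ⟨v, b⟩
  cases b <;> simp [swapFinset, joinPair]

theorem joinPair_mono {A A' B B' : Finset V} (hA : A ⊆ A') (hB : B ⊆ B') :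
    joinPair A B ⊆ joinPair A' B' :=
  union_subset_union (image_subset_image hA) (image_subset_image hB)

section

variable [Fintype V] {G : SimpleGraph V}

theorem mem_CN {A : Finset V} {v : V} : v ∈ CN G A ↔ ∀ a ∈ A, G.Adj a v := by
  simp [CN]

theorem CN_antitone : Antitone (CN G) := fun _ _ h _ hv =>
  mem_CN.2 fun a ha => mem_CN.1 hv a (h ha)

theorem CN_empty : CN G ∅ = univ := by
  simp [CN]

theorem CN_ne_univ {A : Finset V} (hA : A.Nonempty) : CN G A ≠ univ := fun h => by
  obtain ⟨a, ha⟩ := hA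
  exact G.loopless.irrefl a (mem_CN.1 (h ▸ mem_univ a) a ha)

theorem LVertex.CN_nonempty {A : Finset V} (hA : LVertex G A) : (CN G A).Nonempty := by
  rw [nonempty_iff_ne_empty]
  intro h
  apply hA.2.1
  rw [← hA.2.2, h, CN_empty]

theorem LVertex.CN {A : Finset V} (hA : LVertex G A) : LVertex G (CN G A) :=
  ⟨hA.CN_nonempty, CN_ne_univ hA.1, by rw [hA.2.2]⟩

theorem SdLVertex.image_CN {𝔸 : Finset (Finset V)} (h : SdLVertex G 𝔸) :
    SdLVertex G (𝔸.image (CN G)) := by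
  refine ⟨h.1.image _, forall_mem_image.2 fun A hA => (h.2.1 A hA).CN, ?_⟩
  rw [coe_image]
  exact h.2.2.image_of_antitoneOn (CN_antitone.antitoneOn _)

theorem isLeast_image_CN {𝔸 : Finset (Finset V)} {b : Finset V}
    (hb : IsGreatest (𝔸 : Set (Finset V)) b) :
    IsLeast ((𝔸.image (CN G) : Finset (Finset V)) : Set (Finset V)) (CN G b) := by
  rw [coe_image]
  exact CN_antitone.map_isGreatest hb

theorem isGreatest_image_CN {𝔸 : Finset (Finset V)} {a : Finset V}
    (ha : IsLeast (𝔸 : Set (Finset V)) a) :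
    IsGreatest ((𝔸.image (CN G) : Finset (Finset V)) : Set (Finset V)) (CN G a) := by
  rw [coe_image]
  exact CN_antitone.map_isLeast ha

theorem B1Vertex_joinPair_CN {A B : Finset V} (hA : A.Nonempty) (hB : LVertex G B)
    (hAB : A ⊆ B) : B1Vertex G (joinPair A (CN G B)) := by
  rw [B1Vertex, shore_joinPair_false, shore_joinPair_true]
  refine ⟨hA, hB.CN_nonempty, disjoint_left.2 fun a ha hcn => ?_, fun a ha b hb =>
    mem_CN.1 hb a (hAB ha)⟩
  exact G.loopless.irrefl a (mem_CN.1 hcn a (hAB ha))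

theorem SdLVertex.b1Vertex_joinPair_CN {𝔸 : Finset (Finset V)} {a b : Finset V}
    (h : SdLVertex G 𝔸) (ha : IsLeast (𝔸 : Set (Finset V)) a)
    (hb : IsGreatest (𝔸 : Set (Finset V)) b) : B1Vertex G (joinPair a (CN G b)) :=
  B1Vertex_joinPair_CN (h.2.1 a ha.1).1 (h.2.1 b hb.1) (ha.2 hb.1)

theorem sdSimplex.sdLVertex_of_mem {𝒞 : Finset (Finset (Finset V))} {𝔸 : Finset (Finset V)}
    (h𝒞 : sdSimplex (LSimplex G) 𝒞) (h𝔸 : 𝔸 ∈ 𝒞) : SdLVertex G 𝔸 :=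
  ⟨(h𝒞.1 𝔸 h𝔸).2, (h𝒞.1 𝔸 h𝔸).1⟩

theorem joinPair_CN_subset_of_subset {𝔸 𝔹 : Finset (Finset V)} {a b a' b' : Finset V}
    (ha : IsLeast (𝔸 : Set (Finset V)) a) (hb : IsGreatest (𝔸 : Set (Finset V)) b)
    (ha' : IsLeast (𝔹 : Set (Finset V)) a') (hb' : IsGreatest (𝔹 : Set (Finset V)) b')
    (h : 𝔸 ⊆ 𝔹) : joinPair a' (CN G b') ⊆ joinPair a (CN G b) :=
  joinPair_mono (ha.mono ha' (coe_subset.2 h)) (CN_antitone (hb.mono hb' (coe_subset.2 h)))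

end

theorem sd_Lovasz_to_B1_general [Fintype V] (G : SimpleGraph V) :
    (∀ 𝔸, SdLVertex G 𝔸 →
      (∃! A, A ∈ 𝔸 ∧ ∀ B ∈ 𝔸, A ⊆ B) ∧ (∃! A, A ∈ 𝔸 ∧ ∀ B ∈ 𝔸, B ⊆ A)) ∧
    (∀ mn mx : Finset (Finset V) → Finset V,
      (∀ 𝔸, SdLVertex G 𝔸 → mn 𝔸 ∈ 𝔸 ∧ ∀ B ∈ 𝔸, mn 𝔸 ⊆ B) →
      (∀ 𝔸, SdLVertex G 𝔸 → mx 𝔸 ∈ 𝔸 ∧ ∀ B ∈ 𝔸, B ⊆ mx 𝔸) →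
      (∀ 𝔸, SdLVertex G 𝔸 → B1Vertex G (joinPair (mn 𝔸) (CN G (mx 𝔸)))) ∧
      (∀ 𝒞 : Finset (Finset (Finset V)), sdSimplex (LSimplex G) 𝒞 →
        B1Simplex G (𝒞.image fun 𝔸 => joinPair (mn 𝔸) (CN G (mx 𝔸)))) ∧
      (∀ 𝔸, SdLVertex G 𝔸 →
        joinPair (mn (𝔸.image (CN G))) (CN G (mx (𝔸.image (CN G)))) =
          swapFinset (joinPair (mn 𝔸) (CN G (mx 𝔸))))) := by
  refine ⟨fun 𝔸 h => ⟨?_, ?_⟩, fun mn mx hmn hmx => ?_⟩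
  · obtain ⟨a, ha⟩ := IsChain.exists_isLeast h.1 h.2.2
    exact ⟨a, ha, fun b hb => IsLeast.unique hb ha⟩
  · obtain ⟨a, ha⟩ := IsChain.exists_isGreatest h.1 h.2.2
    exact ⟨a, ha, fun b hb => IsGreatest.unique hb ha⟩
  have hvert (𝔸) (h : SdLVertex G 𝔸) : B1Vertex G (joinPair (mn 𝔸) (CN G (mx 𝔸))) :=
    h.b1Vertex_joinPair_CN (hmn 𝔸 h) (hmx 𝔸 h)
  refine ⟨hvert, fun 𝒞 h𝒞 => ⟨?_, ?_⟩, fun 𝔸 h => ?_⟩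
  · exact forall_mem_image.2 fun 𝔸 h𝔸 => hvert 𝔸 (h𝒞.sdLVertex_of_mem h𝔸)
  · rw [coe_image]
    exact h𝒞.2.image_of_antitoneOn fun 𝔸 h𝔸 𝔹 h𝔹 hsub =>
      joinPair_CN_subset_of_subset (hmn 𝔸 (h𝒞.sdLVertex_of_mem h𝔸))
        (hmx 𝔸 (h𝒞.sdLVertex_of_mem h𝔸)) (hmn 𝔹 (h𝒞.sdLVertex_of_mem h𝔹))
        (hmx 𝔹 (h𝒞.sdLVertex_of_mem h𝔹)) hsub
  · have hmn' : mn (𝔸.image (CN G)) = CN G (mx 𝔸) :=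
      IsLeast.unique (hmn _ h.image_CN) (isLeast_image_CN (hmx 𝔸 h))
    have hmx' : mx (𝔸.image (CN G)) = CN G (mn 𝔸) :=
      IsGreatest.unique (hmx _ h.image_CN) (isGreatest_image_CN (hmn 𝔸 h))
    rw [hmn', hmx', (h.2.1 _ (hmn 𝔸 h).1).2.2, swapFinset_joinPair]

/-- The map sending a vertex `𝔸 = (A₀ ⊂ ⋯ ⊂ A_k)` of `sd L(G)` to `A₀ ⊎ CN(A_k)` is a
well-defined simplicial ℤ₂-map `sd L(G) → B₁(G)` (stated for arbitrary choices `mn 𝔸`,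
`mx 𝔸` of the least and greatest element of each chain `𝔸`, which exist uniquely). -/
theorem sd_Lovasz_to_B1 [Fintype V] (G : SimpleGraph V) (hiso : ∀ v : V, ∃ u, G.Adj v u) :
    (∀ 𝔸, SdLVertex G 𝔸 →
      (∃! A, A ∈ 𝔸 ∧ ∀ B ∈ 𝔸, A ⊆ B) ∧ (∃! A, A ∈ 𝔸 ∧ ∀ B ∈ 𝔸, B ⊆ A)) ∧
    (∀ mn mx : Finset (Finset V) → Finset V,
      (∀ 𝔸, SdLVertex G 𝔸 → mn 𝔸 ∈ 𝔸 ∧ ∀ B ∈ 𝔸, mn 𝔸 ⊆ B) →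
      (∀ 𝔸, SdLVertex G 𝔸 → mx 𝔸 ∈ 𝔸 ∧ ∀ B ∈ 𝔸, B ⊆ mx 𝔸) →
      (∀ 𝔸, SdLVertex G 𝔸 → B1Vertex G (joinPair (mn 𝔸) (CN G (mx 𝔸)))) ∧
      (∀ 𝒞 : Finset (Finset (Finset V)), sdSimplex (LSimplex G) 𝒞 →
        B1Simplex G (𝒞.image fun 𝔸 => joinPair (mn 𝔸) (CN G (mx 𝔸)))) ∧
      (∀ 𝔸, SdLVertex G 𝔸 →
        joinPair (mn (𝔸.image (CN G))) (CN G (mx (𝔸.image (CN G)))) =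
          swapFinset (joinPair (mn 𝔸) (CN G (mx 𝔸))))) :=
  sd_Lovasz_to_B1_general G
end
end
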